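/- Let X = (a/2·(x²−y²) + bx + c)∂_x + (ax+b)y·∂_y on the upper half-plane and let ω be its dual 1-form with respect to the hyperbolic metric (dx²+dy²)/y². Then the Lie derivative of ω along X vanishes: L_X ω = 0. -/

import Mathlib

/-- Components of the soliton vector field on the upper half-plane. -/
noncomputable def VX1 (a b c x y : ℝ) : ℝ := a / 2 * (x ^ 2 - y ^ 2) + b * x + c
noncomputable def VX2 (a b x y : ℝ) : ℝ := (a * x + b) * y

/-- Components of its dual 1-form `ω = (X¹/y²)dx + (X²/y²)dy` w.r.t. `g=(dx²+dy²)/y²`. -/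
noncomputable def Pw (a b c x y : ℝ) : ℝ := VX1 a b c x y / y ^ 2
noncomputable def Qw (a b x y : ℝ) : ℝ := VX2 a b x y / y ^ 2

/-- `i_X ω = ω(X)`. -/
noncomputable def fXw (a b c x y : ℝ) : ℝ :=
  Pw a b c x y * VX1 a b c x y + Qw a b x y * VX2 a b x y

/-- The coefficient of `dω = R dx∧dy`. -/
noncomputable def Rw (a b c x y : ℝ) : ℝ :=
  deriv (fun x' => Qw a b x' y) x - deriv (fun y' => Pw a b c x y') y

/-
`X` is a Killing field of the hyperbolic metric, so its dual form is Lie-invariant. Concretely,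
`ω(X) = ((X¹)² + (X²)²)/y²` and `dω = (2a/y + 2X¹/y³) dx∧dy`; with these closed forms both
components of Cartan's formula cancel after clearing denominators.
-/

section SolitonField

variable (a b c x y : ℝ)

lemma hasDerivAt_VX1_x : HasDerivAt (fun x' => VX1 a b c x' y) (a * x + b) x := by
  have := ((((hasDerivAt_pow 2 x).sub_const (y ^ 2)).const_mul (a / 2)).add
    ((hasDerivAt_id x).const_mul b)).add_const c
  exact this.congr_deriv (by simp; ring)

lemma hasDerivAt_VX1_y : HasDerivAt (fun y' => VX1 a b c x y') (-(a * y)) y := by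
  have := ((((hasDerivAt_pow 2 y).const_sub (x ^ 2)).const_mul (a / 2)).add_const
    (b * x)).add_const c
  exact this.congr_deriv (by simp; ring)

lemma hasDerivAt_VX2_x : HasDerivAt (fun x' => VX2 a b x' y) (a * y) x := by
  have := (((hasDerivAt_id x).const_mul a).add_const b).mul_const y
  exact this.congr_deriv (by simp)

lemma hasDerivAt_VX2_y : HasDerivAt (fun y' => VX2 a b x y') (a * x + b) y :=
  ((hasDerivAt_id y).const_mul (a * x + b)).congr_deriv (mul_one _)

lemma fXw_eq : fXw a b c x y = (VX1 a b c x y ^ 2 + VX2 a b x y ^ 2) / y ^ 2 := by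
  simp only [fXw, Pw, Qw]
  ring

lemma Rw_eq (hy : y ≠ 0) : Rw a b c x y = 2 * a / y + 2 * VX1 a b c x y / y ^ 3 := by
  have hQ : deriv (fun x' => Qw a b x' y) x = a * y / y ^ 2 :=
    ((hasDerivAt_VX2_x a b x y).div_const _).deriv
  have hP := ((hasDerivAt_VX1_y a b c x y).fun_div (hasDerivAt_pow 2 y) (pow_ne_zero 2 hy)).deriv
  simp only [Rw, hQ, Pw, hP]
  field_simp
  ring

lemma deriv_fXw_x :
    deriv (fun x' => fXw a b c x' y) x =
      2 * (VX1 a b c x y * (a * x + b) + VX2 a b x y * (a * y)) / y ^ 2 := by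
  simp only [fXw_eq]
  have := ((((hasDerivAt_VX1_x a b c x y).fun_pow 2).fun_add
    ((hasDerivAt_VX2_x a b x y).fun_pow 2)).div_const (y ^ 2)).deriv
  rw [this]
  ring

lemma deriv_fXw_y (hy : y ≠ 0) :
    deriv (fun y' => fXw a b c x y') y =
      2 * (VX1 a b c x y * (-(a * y)) + VX2 a b x y * (a * x + b)) / y ^ 2 -
        2 * (VX1 a b c x y ^ 2 + VX2 a b x y ^ 2) / y ^ 3 := by
  simp only [fXw_eq]
  have := ((((hasDerivAt_VX1_y a b c x y).fun_pow 2).fun_add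
    ((hasDerivAt_VX2_y a b x y).fun_pow 2)).fun_div (hasDerivAt_pow 2 y) (pow_ne_zero 2 hy)).deriv
  rw [this]
  field_simp
  ring

end SolitonField

/-- `L_X ω = 0` on the upper half-plane, by Cartan's formula `L_X ω = d(i_X ω) + i_X(dω)`:
both the `dx`-component `∂_x(ω(X)) − R·X²` and the `dy`-component `∂_y(ω(X)) + R·X¹`
vanish. -/
theorem stmt2 (a b c : ℝ) (x y : ℝ) (hy : 0 < y) :
    deriv (fun x' => fXw a b c x' y) x - Rw a b c x y * VX2 a b x y = 0 ∧
    deriv (fun y' => fXw a b c x y') y + Rw a b c x y * VX1 a b c x y = 0 := by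
  have hy0 := hy.ne'
  rw [deriv_fXw_x, deriv_fXw_y _ _ _ _ _ hy0, Rw_eq _ _ _ _ _ hy0]
  simp only [VX1, VX2]
  constructor <;> (field_simp; ring)
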